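/- Define b_m(α) = (1/m)·∫_{α−1}^{α}(x + 1/2 − α)·∏_{k=0}^{m−1}(k+x) dx. Then for every real α ≥ 0 and integer m ≥ 1, b_m(α + 1/2) = (1/m)·∫_0^{1/2} u·(∏_{k=0}^{m−1}(k+α+u) − ∏_{k=0}^{m−1}(k+α−u)) du; consequently b_m(α + 1/2) > 0 for all α > 0 and m ≥ 1. -/

import Mathlib

/-!
Substituting `x = α + u` turns `b_m(α + 1/2)` into the first moment `∫_{-1/2}^{1/2} u P(α + u) du`
of `P(x) = ∏_{k<m} (k + x)`; folding the interval at `0` leaves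
`∫_0^{1/2} u (P(α + u) - P(α - u)) du`. For `0 < u < 1/2 < α + 1` every factor `k + α - u` is
strictly below `k + α + u`, and if `α - u ≤ 0` the left product is not even positive, so the
integrand is positive.
-/

noncomputable def binetB (m : ℕ) (α : ℝ) : ℝ :=
  (1 / (m : ℝ)) * ∫ x in (α - 1)..α, (x + 1/2 - α) * ∏ k ∈ Finset.range m, ((k : ℝ) + x)

open intervalIntegral Finset

theorem intervalIntegral.integral_sub_smul_eq_integral_smul_sub_reflect {E : Type*}
    [NormedAddCommGroup E] [NormedSpace ℝ E] {f : ℝ → E} (hf : Continuous f) (c r : ℝ) :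
    ∫ x in (c - r)..(c + r), (x - c) • f x = ∫ u in 0..r, u • (f (c + u) - f (c - u)) := by
  have hint : ∀ a b, IntervalIntegrable (fun u : ℝ => u • f (c + u)) MeasureTheory.volume a b :=
    fun a b => (continuous_id.smul (hf.comp (continuous_const_add c))).intervalIntegrable a b
  calc ∫ x in (c - r)..(c + r), (x - c) • f x
      = ∫ u in -r..r, u • f (c + u) := by
        rw [sub_eq_add_neg, ← integral_comp_add_left (fun x => (x - c) • f x) c]
        simp only [add_sub_cancel_left]
    _ = (∫ u in -r..0, u • f (c + u)) + ∫ u in 0..r, u • f (c + u) :=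
        (integral_add_adjacent_intervals (hint _ _) (hint _ _)).symm
    _ = (∫ u in 0..r, -(u • f (c - u))) + ∫ u in 0..r, u • f (c + u) := by
        rw [← neg_zero, ← integral_comp_neg, neg_zero]
        simp only [neg_smul, sub_eq_add_neg]
    _ = ∫ u in 0..r, u • (f (c + u) - f (c - u)) := by
        rw [integral_neg, neg_add_eq_sub, ← integral_sub]
        · simp only [smul_sub]
        · exact hint _ _
        · exact (continuous_id.smul (hf.comp (continuous_sub_left c))).intervalIntegrable _ _

theorem prod_range_add_sub_lt_prod_range_add_add {m : ℕ} (hm : 1 ≤ m) {α u : ℝ} (hα : 0 ≤ α)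
    (hu : 0 < u) (huα : u ≤ α + 1) :
    ∏ k ∈ range m, ((k : ℝ) + α - u) < ∏ k ∈ range m, ((k : ℝ) + α + u) := by
  rcases le_or_gt (α - u) 0 with h | h
  · have hpos : 0 < ∏ k ∈ range m, ((k : ℝ) + α + u) := prod_pos fun k _ => by positivity
    refine lt_of_le_of_lt ?_ hpos
    obtain ⟨n, rfl⟩ : ∃ n, m = n + 1 := ⟨m - 1, by omega⟩
    rw [prod_range_succ']
    refine mul_nonpos_of_nonneg_of_nonpos (prod_nonneg fun k _ => ?_) (by simpa using h)
    push_cast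
    linarith [(k.cast_nonneg : (0 : ℝ) ≤ k)]
  · refine prod_lt_prod_of_nonempty (fun k _ => ?_) (fun k _ => ?_)
      (nonempty_range_iff.mpr (by omega))
    · linarith [(k.cast_nonneg : (0 : ℝ) ≤ k)]
    · linarith

theorem binetB_add_half (m : ℕ) (α : ℝ) :
    binetB m (α + 1/2) = (1 / (m : ℝ)) * ∫ u in (0:ℝ)..(1/2),
        u * ((∏ k ∈ range m, ((k : ℝ) + α + u)) - ∏ k ∈ range m, ((k : ℝ) + α - u)) := by
  have hP : Continuous fun x : ℝ => ∏ k ∈ range m, ((k : ℝ) + x) := by fun_prop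
  have := integral_sub_smul_eq_integral_smul_sub_reflect hP α (1/2)
  simp only [smul_eq_mul, ← add_assoc, ← add_sub_assoc] at this
  rw [binetB, show α + 1/2 - 1 = α - 1/2 by ring, ← this]
  congr 1
  exact integral_congr fun x _ => by ring_nf

theorem binetB_half_shift_general (m : ℕ) (hm : 1 ≤ m) (α : ℝ) :
    binetB m (α + 1/2) =
      (1 / (m : ℝ)) * ∫ u in (0:ℝ)..(1/2),
        u * ((∏ k ∈ Finset.range m, ((k : ℝ) + α + u)) -
             ∏ k ∈ Finset.range m, ((k : ℝ) + α - u)) ∧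
    (0 < α → 0 < binetB m (α + 1/2)) := by
  refine ⟨binetB_add_half m α, fun hα => ?_⟩
  rw [binetB_add_half]
  refine mul_pos (by positivity) (intervalIntegral_pos_of_pos_on ?_ (fun u hu => ?_) one_half_pos)
  · exact Continuous.intervalIntegrable (by fun_prop) _ _
  · exact mul_pos hu.1 (sub_pos.mpr
      (prod_range_add_sub_lt_prod_range_add_add hm hα.le hu.1 (by linarith [hu.2])))

theorem binetB_half_shift (m : ℕ) (hm : 1 ≤ m) (α : ℝ) (hα : 0 ≤ α) :
    binetB m (α + 1/2) =
      (1 / (m : ℝ)) * ∫ u in (0:ℝ)..(1/2),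
        u * ((∏ k ∈ Finset.range m, ((k : ℝ) + α + u)) -
             ∏ k ∈ Finset.range m, ((k : ℝ) + α - u)) ∧
    (0 < α → 0 < binetB m (α + 1/2)) :=
  binetB_half_shift_general m hm α
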